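/- The von Dyck group G₀(3,3,3), i.e. the presented group ⟨x, y, z ∣ x³ = y³ = z³ = xyz = 1⟩ (the quotient of the free group on three generators x, y, z by the normal closure of the relators x³, y³, z³, xyz), has Grossman's Property A. -/

import Mathlib

/-!
`G₀(3,3,3)` is the orientation-preserving symmetry group of the tiling of the plane by
equilateral triangles, i.e. the wallpaper group `p3 = ℤ[ω] ⋊ μ₃` of affine maps `u ↦ v + ωᵏ u`.
The isomorphism sends `x` to the rotation `u ↦ ω u` and `y` to `u ↦ 1 + ω u`; its inverse
exists because `t₁ = y x⁻¹` and `t₂ = x t₁ x⁻¹` commute, so they span a copy of the lattice.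

In `p3` the conjugates of the rotation `x` depend only on the translation part of the
conjugator, and those of a translation only on its rotation part. Hence for a class-preserving
automorphism `φ`, with `φ x = c x c⁻¹` and `φ t = d t d⁻¹` for the translation `t` by `1`,
the element with translation part of `c` and rotation part of `d` conjugates both generators
as `φ` does, so `φ` is inner. Property A passes along the isomorphism.
-/

/-- A group `G` has Grossman's Property A if every class-preserving automorphism
(i.e. one sending each element to a conjugate of itself) is inner. -/
def HasPropertyA (G : Type*) [Group G] : Prop :=
  ∀ φ : G ≃* G, (∀ g : G, IsConj g (φ g)) → ∃ h : G, ∀ g : G, φ g = h * g * h⁻¹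

/-- The relators of the von Dyck group `G₀(p,q,r) = ⟨x, y, z ∣ xᵖ = y^q = z^r = xyz = 1⟩`. -/
def vonDyckRels (p q r : ℕ) : Set (FreeGroup (Fin 3)) :=
  {(FreeGroup.of 0) ^ p, (FreeGroup.of 1) ^ q, (FreeGroup.of 2) ^ r,
    FreeGroup.of 0 * FreeGroup.of 1 * FreeGroup.of 2}

lemma pow_val_add {M : Type*} [Monoid M] {n : ℕ} [NeZero n] {a : M} (ha : a ^ n = 1)
    (k l : ZMod n) : a ^ (k + l).val = a ^ k.val * a ^ l.val := by
  rw [ZMod.val_add, ← pow_eq_pow_mod _ ha, pow_add]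

lemma HasPropertyA.of_mulEquiv {G H : Type*} [Group G] [Group H] (e : G ≃* H)
    (hG : HasPropertyA G) : HasPropertyA H := by
  intro φ hφ
  obtain ⟨h, hh⟩ := hG ((e.trans φ).trans e.symm) fun g => by
    simpa using e.symm.toMonoidHom.map_isConj (hφ (e g))
  refine ⟨e h, fun g => ?_⟩
  simpa using congrArg e (hh (e.symm g))

/-- Multiplication by `ω` on `ℤ[ω] ≅ ℤ²` in the basis `1, ω`: `ω (a + b ω) = -b + (a - b) ω`. -/
def eisensteinRot : AddMonoid.End (ℤ × ℤ) :=
  AddMonoidHom.mk' (fun v => (-v.2, v.1 - v.2)) fun v w => by ext <;> simp <;> ring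

@[simp] lemma eisensteinRot_apply (v : ℤ × ℤ) : eisensteinRot v = (-v.2, v.1 - v.2) := rfl

lemma eisensteinRot_pow_three : eisensteinRot ^ 3 = 1 := by
  ext v <;> simp [pow_succ]; ring

/-- `⟨v, k⟩` is the affine map `u ↦ v + ωᵏ u` of `ℤ[ω]`. -/
@[ext] structure P3 where
  v : ℤ × ℤ
  k : ZMod 3

namespace P3

def rot (k : ZMod 3) : AddMonoid.End (ℤ × ℤ) := eisensteinRot ^ k.val

@[simp] lemma rot_zero (v : ℤ × ℤ) : rot 0 v = v := rfl

@[simp] lemma rot_one : rot 1 = eisensteinRot := pow_one _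

lemma rot_add (k l : ZMod 3) (v : ℤ × ℤ) : rot (k + l) v = rot k (rot l v) := by
  rw [rot, pow_val_add eisensteinRot_pow_three]; rfl

instance : Mul P3 := ⟨fun a b => ⟨a.v + rot a.k b.v, a.k + b.k⟩⟩
instance : One P3 := ⟨⟨0, 0⟩⟩
instance : Inv P3 := ⟨fun a => ⟨-rot (-a.k) a.v, -a.k⟩⟩

@[simp] lemma mul_v (a b : P3) : (a * b).v = a.v + rot a.k b.v := rfl
@[simp] lemma mul_k (a b : P3) : (a * b).k = a.k + b.k := rfl
@[simp] lemma one_v : (1 : P3).v = 0 := rfl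
@[simp] lemma one_k : (1 : P3).k = 0 := rfl
@[simp] lemma inv_v (a : P3) : a⁻¹.v = -rot (-a.k) a.v := rfl
@[simp] lemma inv_k (a : P3) : a⁻¹.k = -a.k := rfl

instance : Group P3 :=
  Group.ofLeftAxioms
    (fun a b c => by ext : 1 <;> simp [rot_add, add_assoc])
    (fun a => by ext : 1 <;> simp)
    (fun a => by ext : 1 <;> simp)

def x : P3 := ⟨0, 1⟩
def t : P3 := ⟨(1, 0), 0⟩

lemma conj_eq (c g : P3) : c * g * c⁻¹ = ⟨c.v + rot c.k g.v - rot g.k c.v, g.k⟩ := by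
  have h : c.k + g.k + -c.k = g.k := by ring
  ext : 1
  · simp [← rot_add, h, sub_eq_add_neg]
  · simp [h]

lemma conj_translation (c : P3) (v : ℤ × ℤ) : c * ⟨v, 0⟩ * c⁻¹ = ⟨rot c.k v, 0⟩ := by
  simp [conj_eq]

lemma conj_x (c : P3) : c * x * c⁻¹ = ⟨c.v - eisensteinRot c.v, 1⟩ := by
  simp [conj_eq, x]

lemma translation_zpow (v : ℤ × ℤ) (n : ℤ) : (⟨v, 0⟩ : P3) ^ n = ⟨n • v, 0⟩ := by
  induction n using Int.induction_on with
  | zero => ext : 1 <;> simp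
  | succ n ih => rw [zpow_add_one, ih]; ext : 1 <;> simp [add_smul]
  | pred n ih => rw [zpow_sub_one, ih]; ext : 1 <;> simp [sub_smul]; abel

lemma x_pow (n : ℕ) : x ^ n = ⟨0, n⟩ := by
  induction n with
  | zero => rfl
  | succ n ih => rw [pow_succ, ih]; ext : 1 <;> simp [x]

lemma eq_translation_mul_x_pow (g : P3) : g = ⟨g.v, 0⟩ * x ^ g.k.val := by
  ext : 1 <;> simp [x_pow]

lemma translation_eq (v : ℤ × ℤ) : (⟨v, 0⟩ : P3) = t ^ v.1 * (x * t * x⁻¹) ^ v.2 := by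
  rw [t, conj_translation, translation_zpow, translation_zpow]
  ext <;> simp [x]

lemma hom_ext {H : Type*} [Group H] {f g : P3 →* H} (hx : f x = g x) (ht : f t = g t) :
    f = g := by
  ext p
  rw [eq_translation_mul_x_pow p, translation_eq]
  simp only [map_mul, map_pow, map_zpow, map_inv, hx, ht]

lemma mk_one_pow_three (v : ℤ × ℤ) : (⟨v, 1⟩ : P3) ^ 3 = 1 := by
  rw [pow_three]
  ext : 1
  · ext <;> simp
  · rfl

theorem hasPropertyA : HasPropertyA P3 := by
  intro φ hφ
  obtain ⟨c, hc⟩ := isConj_iff.1 (hφ x)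
  obtain ⟨d, hd⟩ := isConj_iff.1 (hφ t)
  let h : P3 := ⟨c.v, d.k⟩
  have hφ_eq : φ.toMonoidHom = (MulAut.conj h).toMonoidHom := by
    refine hom_ext ?_ ?_
    · show φ x = h * x * h⁻¹
      rw [← hc, conj_x, conj_x]
    · show φ t = h * t * h⁻¹
      rw [← hd, t, conj_translation, conj_translation]
  exact ⟨h, fun g => DFunLike.congr_fun hφ_eq g⟩

end P3

abbrev VonDyck333 : Type := PresentedGroup (vonDyckRels 3 3 3)

namespace VonDyck333

def x : VonDyck333 := PresentedGroup.of 0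
def y : VonDyck333 := PresentedGroup.of 1
def z : VonDyck333 := PresentedGroup.of 2

lemma x_pow_three : x ^ 3 = 1 := PresentedGroup.one_of_mem (by simp [vonDyckRels])
lemma y_pow_three : y ^ 3 = 1 := PresentedGroup.one_of_mem (by simp [vonDyckRels])
lemma z_pow_three : z ^ 3 = 1 := PresentedGroup.one_of_mem (by simp [vonDyckRels])
lemma x_mul_y_mul_z : x * y * z = 1 := PresentedGroup.one_of_mem (by simp [vonDyckRels])

lemma z_eq_inv : z = (x * y)⁻¹ := eq_inv_of_mul_eq_one_right x_mul_y_mul_z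

lemma x_mul_y_pow_three : (x * y) ^ 3 = 1 := by
  rw [← inv_eq_one, ← inv_pow, ← z_eq_inv, z_pow_three]

/-- `t₁` and `t₂` are the translations by `1` and by `ω` of `p3`. -/
def t₁ : VonDyck333 := y * x⁻¹
def t₂ : VonDyck333 := x * t₁ * x⁻¹

lemma t₁_mul_t₂ : t₁ * t₂ = y⁻¹ * x⁻¹ * x⁻¹ := by
  calc t₁ * t₂ = y ^ 3 * (y⁻¹ * x⁻¹ * x⁻¹) := by
        simp only [t₁, t₂, pow_succ, pow_zero, one_mul]; group
    _ = y⁻¹ * x⁻¹ * x⁻¹ := by rw [y_pow_three, one_mul]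

lemma t₂_mul_t₁ : t₂ * t₁ = y⁻¹ * x⁻¹ * x⁻¹ := by
  calc t₂ * t₁ = x * y * (x ^ 3)⁻¹ * (x * y) * x⁻¹ := by
        simp only [t₁, t₂, pow_succ, pow_zero, one_mul]; group
    _ = (x * y) ^ 3 * (y⁻¹ * x⁻¹ * x⁻¹) := by
        rw [x_pow_three, inv_one, mul_one]; simp only [pow_succ, pow_zero, one_mul]; group
    _ = y⁻¹ * x⁻¹ * x⁻¹ := by rw [x_mul_y_pow_three, one_mul]

lemma commute_t₁_t₂ : Commute t₁ t₂ := t₁_mul_t₂.trans t₂_mul_t₁.symm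

lemma x_mul_t₂_mul_x_inv : x * t₂ * x⁻¹ = (t₁ * t₂)⁻¹ := by
  calc x * t₂ * x⁻¹ = (y⁻¹ * x⁻¹ * x⁻¹)⁻¹ * (x ^ 3)⁻¹ := by
        simp only [t₁, t₂, mul_assoc, mul_inv_rev, inv_inv]; group
    _ = (t₁ * t₂)⁻¹ := by rw [x_pow_three, inv_one, mul_one, t₁_mul_t₂]

def lattice (v : ℤ × ℤ) : VonDyck333 := t₁ ^ v.1 * t₂ ^ v.2

lemma lattice_add (v w : ℤ × ℤ) : lattice (v + w) = lattice v * lattice w := by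
  have h : Commute (t₂ ^ v.2) (t₁ ^ w.1) := (commute_t₁_t₂.zpow_zpow _ _).symm
  simp only [lattice, Prod.fst_add, Prod.snd_add, zpow_add, mul_assoc, ← h.left_comm]

lemma x_mul_lattice (v : ℤ × ℤ) : x * lattice v = lattice (eisensteinRot v) * x := by
  have h : Commute (t₂ ^ v.1) (t₁ ^ (-v.2)) := (commute_t₁_t₂.zpow_zpow _ _).symm
  rw [← mul_inv_eq_iff_eq_mul]
  calc x * lattice v * x⁻¹ = (x * t₁ * x⁻¹) ^ v.1 * (x * t₂ * x⁻¹) ^ v.2 := by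
        simp only [lattice, ← MulAut.conj_apply, map_mul, map_zpow]
    _ = t₂ ^ v.1 * (t₁ ^ (-v.2) * t₂ ^ (-v.2)) := by
        rw [x_mul_t₂_mul_x_inv, inv_zpow', commute_t₁_t₂.mul_zpow]; rfl
    _ = lattice (eisensteinRot v) := by
        rw [← mul_assoc, h.eq, mul_assoc, ← zpow_add]; simp [lattice, sub_eq_add_neg]

lemma x_pow_mul_lattice (n : ℕ) (v : ℤ × ℤ) :
    x ^ n * lattice v = lattice ((eisensteinRot ^ n) v) * x ^ n := by
  induction n generalizing v with
  | zero => simp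
  | succ n ih => rw [pow_succ, mul_assoc, x_mul_lattice, ← mul_assoc, ih, mul_assoc]; rfl

def ofP3 : P3 →* VonDyck333 where
  toFun g := lattice g.v * x ^ g.k.val
  map_one' := by simp [lattice]
  map_mul' g h := by
    simp only [P3.mul_v, P3.mul_k, lattice_add, pow_val_add x_pow_three, mul_assoc]
    rw [← mul_assoc (x ^ g.k.val), x_pow_mul_lattice, mul_assoc]; rfl

lemma ofP3_apply (g : P3) : ofP3 g = lattice g.v * x ^ g.k.val := rfl

def toP3Gen : Fin 3 → P3 := ![P3.x, ⟨(1, 0), 1⟩, ⟨(1, 1), 1⟩]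

lemma toP3Gen_rels : ∀ r ∈ vonDyckRels 3 3 3, FreeGroup.lift toP3Gen r = 1 := by
  simp only [vonDyckRels, Set.mem_insert_iff, Set.mem_singleton_iff]
  rintro r (rfl | rfl | rfl | rfl) <;> simp only [map_pow, map_mul, FreeGroup.lift_apply_of]
  · exact P3.mk_one_pow_three _
  · exact P3.mk_one_pow_three _
  · exact P3.mk_one_pow_three _
  · ext <;> simp [toP3Gen, P3.x] <;> decide

def toP3 : VonDyck333 →* P3 := PresentedGroup.toGroup toP3Gen_rels

lemma toP3_of (i : Fin 3) : toP3 (PresentedGroup.of i) = toP3Gen i :=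
  PresentedGroup.toGroup.of _

lemma ofP3_comp_toP3 : ofP3.comp toP3 = MonoidHom.id _ := by
  refine PresentedGroup.ext fun i => ?_
  fin_cases i <;> simp only [MonoidHom.comp_apply, toP3_of, ofP3_apply]
  · show lattice 0 * x ^ 1 = x
    simp [lattice]
  · show lattice (1, 0) * x ^ 1 = y
    simp [lattice, t₁]
  · show lattice (1, 1) * x ^ 1 = z
    simp only [lattice, zpow_one, pow_one, t₁_mul_t₂, z_eq_inv]
    group

lemma toP3_comp_ofP3 : toP3.comp ofP3 = MonoidHom.id _ := by
  refine P3.hom_ext ?_ ?_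
  · show toP3 (lattice 0 * x ^ 1) = P3.x
    simp only [lattice, Prod.fst_zero, Prod.snd_zero, zpow_zero, mul_one, pow_one]
    exact toP3_of 0
  · show toP3 (lattice (1, 0) * x ^ 0) = P3.t
    simp only [lattice, t₁, zpow_one, zpow_zero, pow_zero, mul_one, map_mul, map_inv]
    rw [x, y, toP3_of, toP3_of]
    ext : 1 <;> simp [toP3Gen, P3.x, P3.t]

def equivP3 : VonDyck333 ≃* P3 := toP3.toMulEquiv ofP3 ofP3_comp_toP3 toP3_comp_ofP3

end VonDyck333

theorem vonDyck_333_propertyA : HasPropertyA (PresentedGroup (vonDyckRels 3 3 3)) :=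
  HasPropertyA.of_mulEquiv VonDyck333.equivP3.symm P3.hasPropertyA
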